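/- arXiv:1404.3118 — 7 statements merged into one kernel-verified Lean document; each statement's English description precedes it below -/
import Mathlib

section
/- Let E be a real inner product space, let p > 1 be a real number, let t ≥ 0 be real, and let X, Y ∈ E with Y ≠ 0. Then ‖X‖^p + (p−1)·t^p·‖Y‖^p − p·t^(p−1)·‖Y‖^(p−2)·⟨Y, X⟩ ≥ 0. -/
/-!
Put `s = t‖Y‖`. Cauchy–Schwarz bounds the cross term by `p s^(p-1) ‖X‖`, and Young's inequality
with exponents `p` and `p/(p-1)` gives `p ‖X‖ s^(p-1) ≤ ‖X‖^p + (p-1) s^p`.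
-/

open Real

theorem Real.mul_mul_rpow_sub_one_le {p a s : ℝ} (hp : 1 < p) (ha : 0 ≤ a) (hs : 0 ≤ s) :
    p * (a * s ^ (p - 1)) ≤ a ^ p + (p - 1) * s ^ p := by
  have hpow : (s ^ (p - 1)) ^ (p / (p - 1)) = s ^ p := by
    rw [← rpow_mul hs, mul_div_cancel₀ _ (sub_ne_zero.mpr hp.ne')]
  have young := young_inequality_of_nonneg ha (rpow_nonneg hs (p - 1))
    (HolderConjugate.conjExponent hp)
  rw [conjExponent, hpow] at young
  calc p * (a * s ^ (p - 1)) ≤ p * (a ^ p / p + s ^ p / (p / (p - 1))) := by gcongr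
    _ = a ^ p + (p - 1) * s ^ p := by field_simp

theorem rpow_sub_two_mul_inner_le {E : Type*} [NormedAddCommGroup E] [InnerProductSpace ℝ E]
    {p : ℝ} (hp : 1 < p) (X Y : E) :
    ‖Y‖ ^ (p - 2) * inner ℝ Y X ≤ ‖Y‖ ^ (p - 1) * ‖X‖ := by
  have hY : ‖Y‖ ^ (p - 1) = ‖Y‖ ^ (p - 2) * ‖Y‖ := by
    rw [show p - 1 = p - 2 + 1 by ring, rpow_add_one' (norm_nonneg Y) (by linarith)]
  rw [hY, mul_assoc]
  exact mul_le_mul_of_nonneg_left (real_inner_le_norm Y X) (rpow_nonneg (norm_nonneg Y) _)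

theorem lagrangian_nonneg_general {E : Type*} [NormedAddCommGroup E] [InnerProductSpace ℝ E]
    {p : ℝ} (hp : 1 < p) {t : ℝ} (ht : 0 ≤ t) (X Y : E) :
    0 ≤ ‖X‖ ^ p + (p - 1) * t ^ p * ‖Y‖ ^ p
        - p * t ^ (p - 1) * ‖Y‖ ^ (p - 2) * (inner ℝ Y X : ℝ) := by
  rw [sub_nonneg]
  calc p * t ^ (p - 1) * ‖Y‖ ^ (p - 2) * inner ℝ Y X
      = p * t ^ (p - 1) * (‖Y‖ ^ (p - 2) * inner ℝ Y X) := by ring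
    _ ≤ p * t ^ (p - 1) * (‖Y‖ ^ (p - 1) * ‖X‖) :=
        mul_le_mul_of_nonneg_left (rpow_sub_two_mul_inner_le hp X Y)
          (mul_nonneg (zero_lt_one.trans hp).le (rpow_nonneg ht _))
    _ = p * (‖X‖ * (t * ‖Y‖) ^ (p - 1)) := by rw [mul_rpow ht (norm_nonneg Y)]; ring
    _ ≤ ‖X‖ ^ p + (p - 1) * (t * ‖Y‖) ^ p :=
        mul_mul_rpow_sub_one_le hp (norm_nonneg X) (mul_nonneg ht (norm_nonneg Y))
    _ = ‖X‖ ^ p + (p - 1) * t ^ p * ‖Y‖ ^ p := by rw [mul_rpow ht (norm_nonneg Y)]; ring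

/-- Pointwise non-negativity of the Lagrangian
`L(φ,g) = |∇φ|^p + (p−1)(φ/g)^p|∇g|^p − p(φ/g)^(p−1)|∇g|^(p−2)⟨∇g,∇φ⟩`
(Proposition 3.1 of the paper), with `X = ∇φ`, `Y = ∇g`, `t = φ/g`. -/
theorem lagrangian_nonneg {E : Type*} [NormedAddCommGroup E] [InnerProductSpace ℝ E]
    {p : ℝ} (hp : 1 < p) {t : ℝ} (ht : 0 ≤ t) (X Y : E) (hY : Y ≠ 0) :
    0 ≤ ‖X‖ ^ p + (p - 1) * t ^ p * ‖Y‖ ^ p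
        - p * t ^ (p - 1) * ‖Y‖ ^ (p - 2) * (inner ℝ Y X : ℝ) :=
  lagrangian_nonneg_general hp ht X Y
end

section
/- Let E be a real inner product space, let p > 1 be a real number, let t ≥ 0 be real, and let X, Y ∈ E with Y ≠ 0. Then ‖X‖^p + (p−1)·t^p·‖Y‖^p − p·t^(p−1)·‖Y‖^(p−2)·⟨Y, X⟩ = 0 if and only if X = t • Y. -/
/-!
Put `a = ‖X‖` and `b = t‖Y‖`. The Lagrangian splits as the sum of the Young gap
`a^p + (p-1) b^p - p b^(p-1) a`, which is weighted AM-GM for `a^p` and `b^p` with weights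
`1/p` and `1 - 1/p`, and the Cauchy–Schwarz gap `‖Y‖‖X‖ - ⟪Y, X⟫` times a non-negative factor.
So it vanishes iff `‖X‖ = t‖Y‖` and (when `t ≠ 0`) `⟪Y, X⟫ = ‖Y‖‖X‖`, and these two together
say `‖X - t • Y‖ = 0`.
-/

open scoped RealInnerProductSpace

namespace Real

variable {p a b : ℝ}

lemma mul_rpow_sub_one_mul_eq_geom_mean (hp : 1 < p) (ha : 0 ≤ a) (hb : 0 ≤ b) :
    p * b ^ (p - 1) * a = p * ((a ^ p) ^ p⁻¹ * (b ^ p) ^ (1 - p⁻¹)) := by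
  have hp0 : p ≠ 0 := by positivity
  rw [rpow_rpow_inv ha hp0, ← rpow_mul hb, mul_one_sub, mul_inv_cancel₀ hp0]
  ring

lemma rpow_add_sub_one_mul_eq_arith_mean (hp : 1 < p) :
    a ^ p + (p - 1) * b ^ p = p * (p⁻¹ * a ^ p + (1 - p⁻¹) * b ^ p) := by
  have hp0 : p ≠ 0 := by positivity
  field_simp

lemma mul_rpow_sub_one_mul_le (hp : 1 < p) (ha : 0 ≤ a) (hb : 0 ≤ b) :
    p * b ^ (p - 1) * a ≤ a ^ p + (p - 1) * b ^ p := by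
  rw [mul_rpow_sub_one_mul_eq_geom_mean hp ha hb, rpow_add_sub_one_mul_eq_arith_mean hp]
  gcongr
  exact geom_mean_le_arith_mean2_weighted (by positivity)
    (sub_pos.2 (inv_lt_one_of_one_lt₀ hp)).le (by positivity) (by positivity) (by ring)

lemma mul_rpow_sub_one_mul_eq_iff (hp : 1 < p) (ha : 0 ≤ a) (hb : 0 ≤ b) :
    p * b ^ (p - 1) * a = a ^ p + (p - 1) * b ^ p ↔ a = b := by
  rw [mul_rpow_sub_one_mul_eq_geom_mean hp ha hb, rpow_add_sub_one_mul_eq_arith_mean hp,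
    mul_right_inj' (by positivity),
    geom_mean_eq_arith_mean2_weighted_iff_of_pos (by positivity)
      (sub_pos.2 (inv_lt_one_of_one_lt₀ hp)) (by positivity) (by positivity) (by ring),
    rpow_left_inj ha hb (by positivity)]

end Real

section InnerProductSpace

variable {E : Type*} [NormedAddCommGroup E] [InnerProductSpace ℝ E]

lemma eq_smul_of_norm_eq_of_mul_inner_eq {t : ℝ} {X Y : E} (hnorm : ‖X‖ = t * ‖Y‖)
    (hinner : t * ⟪Y, X⟫ = t * (‖Y‖ * ‖X‖)) : X = t • Y := by
  have h : ‖X - t • Y‖ ^ 2 = 0 := by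
    rw [norm_sub_sq_real, real_inner_smul_right, norm_smul, real_inner_comm, mul_pow,
      Real.norm_eq_abs, sq_abs]
    linear_combination (-2) * hinner + (‖X‖ - t * ‖Y‖) * hnorm
  rwa [sq_eq_zero_iff, norm_eq_zero, sub_eq_zero] at h

lemma lagrangian_eq_young_gap_add {p t : ℝ} (hp : p ≠ 1) (ht : 0 ≤ t) (X Y : E) :
    ‖X‖ ^ p + (p - 1) * t ^ p * ‖Y‖ ^ p - p * t ^ (p - 1) * ‖Y‖ ^ (p - 2) * ⟪Y, X⟫
      = (‖X‖ ^ p + (p - 1) * (t * ‖Y‖) ^ p - p * (t * ‖Y‖) ^ (p - 1) * ‖X‖)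
        + p * t ^ (p - 1) * ‖Y‖ ^ (p - 2) * (‖Y‖ * ‖X‖ - ⟪Y, X⟫) := by
  have hY : ‖Y‖ ^ (p - 1) = ‖Y‖ ^ (p - 2) * ‖Y‖ := by
    rw [show p - 1 = p - 2 + 1 by ring,
      Real.rpow_add_one' (norm_nonneg Y) (fun h ↦ hp (by linarith))]
  rw [Real.mul_rpow ht (norm_nonneg Y), Real.mul_rpow ht (norm_nonneg Y), hY]
  ring

end InnerProductSpace

theorem lagrangian_eq_zero_iff_general {E : Type*} [NormedAddCommGroup E] [InnerProductSpace ℝ E]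
    {p : ℝ} (hp : 1 < p) {t : ℝ} (ht : 0 ≤ t) (X Y : E) :
    ‖X‖ ^ p + (p - 1) * t ^ p * ‖Y‖ ^ p
        - p * t ^ (p - 1) * ‖Y‖ ^ (p - 2) * (inner ℝ Y X : ℝ) = 0 ↔ X = t • Y := by
  have hp0 : p ≠ 0 := by positivity
  have htY : 0 ≤ t * ‖Y‖ := by positivity
  rw [lagrangian_eq_young_gap_add hp.ne' ht,
    add_eq_zero_iff_of_nonneg (sub_nonneg.2 (Real.mul_rpow_sub_one_mul_le hp (norm_nonneg X) htY))
      (mul_nonneg (by positivity) (sub_nonneg.2 (real_inner_le_norm Y X))),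
    sub_eq_zero, eq_comm, Real.mul_rpow_sub_one_mul_eq_iff hp (norm_nonneg X) htY]
  constructor
  · rintro ⟨hnorm, hcs⟩
    refine eq_smul_of_norm_eq_of_mul_inner_eq hnorm ?_
    rcases mul_eq_zero.1 hcs with hcoef | hcs
    · simp only [mul_eq_zero, hp0, Real.rpow_eq_zero_iff_of_nonneg ht,
        Real.rpow_eq_zero_iff_of_nonneg (norm_nonneg Y), norm_eq_zero, false_or] at hcoef
      rcases hcoef with ⟨rfl, -⟩ | ⟨rfl, -⟩ <;> simp
    · rw [sub_eq_zero.1 hcs]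
  · rintro rfl
    rw [norm_smul, Real.norm_of_nonneg ht, real_inner_smul_right, real_inner_self_eq_norm_sq]
    exact ⟨rfl, by ring⟩

/-- Equality case of the pointwise non-negativity of the Lagrangian
`L(φ,g) = |∇φ|^p + (p−1)(φ/g)^p|∇g|^p − p(φ/g)^(p−1)|∇g|^(p−2)⟨∇g,∇φ⟩`
(Proposition 3.1 of the paper), with `X = ∇φ`, `Y = ∇g`, `t = φ/g`:
the Lagrangian vanishes exactly when `X = t • Y`. -/
theorem lagrangian_eq_zero_iff {E : Type*} [NormedAddCommGroup E] [InnerProductSpace ℝ E]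
    {p : ℝ} (hp : 1 < p) {t : ℝ} (ht : 0 ≤ t) (X Y : E) (hY : Y ≠ 0) :
    ‖X‖ ^ p + (p - 1) * t ^ p * ‖Y‖ ^ p
        - p * t ^ (p - 1) * ‖Y‖ ^ (p - 2) * (inner ℝ Y X : ℝ) = 0 ↔ X = t • Y :=
  lagrangian_eq_zero_iff_general hp ht X Y
end

section
/- Let m ≥ 1 be an integer, let V : ℝ^m → ℝ be continuous, and suppose there exists a twice continuously differentiable function w : ℝ^m → ℝ with w(x) > 0 for all x and Δw(x) + V(x)·w(x) ≤ 0 for all x ∈ ℝ^m, where Δ denotes the Euclidean Laplacian (the trace of the Hessian). Then for every compactly supported continuously differentiable function φ : ℝ^m → ℝ one has ∫_{ℝ^m} V(x)·φ(x)² dx ≤ ∫_{ℝ^m} ‖∇φ(x)‖² dx, with integrals taken with respect to Lebesgue measure. -/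
/-!
Test the supersolution inequality `Δw + V w ≤ 0` against the non-negative function `φ² / w`:
this gives `∫ V φ² ≤ -∫ (φ² / w) Δw`, and integrating by parts the right-hand side becomes
`∫ ⟪∇(φ² / w), ∇w⟫`. Picone's pointwise inequality `⟪∇(φ² / w), ∇w⟫ ≤ ‖∇φ‖²`, which is just
`‖∇φ - (φ / w) ∇w‖² ≥ 0`, concludes.
-/

open MeasureTheory

/-- The Euclidean Laplacian: trace of the Hessian, i.e. the sum of the second partial
derivatives in the directions of the standard basis. -/
noncomputable def laplacian {m : ℕ} (u : EuclideanSpace ℝ (Fin m) → ℝ)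
    (x : EuclideanSpace ℝ (Fin m)) : ℝ :=
  ∑ i, fderiv ℝ (fun y => fderiv ℝ u y (EuclideanSpace.single i (1 : ℝ))) x
    (EuclideanSpace.single i (1 : ℝ))

section Directional

variable {𝕜 E F : Type*} [NontriviallyNormedField 𝕜] [NormedAddCommGroup E] [NormedSpace 𝕜 E]
  [NormedAddCommGroup F] [NormedSpace 𝕜 F] {f : E → F} {n : WithTop ℕ∞}

theorem ContDiff.fderiv_apply_const (hf : ContDiff 𝕜 (n + 1) f) (v : E) :
    ContDiff 𝕜 n (fderiv 𝕜 f · v) :=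
  (hf.fderiv_right le_rfl).clm_apply contDiff_const

theorem ContDiff.continuous_fderiv_apply_const (hf : ContDiff 𝕜 n f) (hn : n ≠ 0) (v : E) :
    Continuous (fderiv 𝕜 f · v) :=
  (hf.continuous_fderiv hn).clm_apply continuous_const

end Directional

theorem HasCompactSupport.fun_pow {α β : Type*} [TopologicalSpace α] [MonoidWithZero β]
    {f : α → β} (hf : HasCompactSupport f) {n : ℕ} (hn : n ≠ 0) :
    HasCompactSupport (fun x => f x ^ n) :=
  hf.comp_left (zero_pow hn)

theorem mul_sq_le_neg_sq_div_mul {V w Δw φ : ℝ} (hw : 0 < w) (hsuper : Δw + V * w ≤ 0) :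
    V * φ ^ 2 ≤ -(φ ^ 2 / w * Δw) := by
  have h := mul_nonpos_of_nonneg_of_nonpos (div_nonneg (sq_nonneg φ) hw.le) hsuper
  rw [mul_add, show φ ^ 2 / w * (V * w) = V * φ ^ 2 by field_simp] at h
  linarith

section Picone

variable {E : Type*} [NormedAddCommGroup E] [NormedSpace ℝ E] {f w : E → ℝ} {x : E}

theorem HasFDerivAt.sq_div {f' w' : E →L[ℝ] ℝ} (hf : HasFDerivAt f f' x)
    (hw : HasFDerivAt w w' x) (hx : w x ≠ 0) :
    HasFDerivAt (fun y => f y ^ 2 / w y) ((2 * f x / w x) • f' - (f x ^ 2 / w x ^ 2) • w') x := by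
  have h := (hf.pow 2).mul ((hasDerivAt_inv hx).comp_hasFDerivAt x hw)
  simp only [div_eq_mul_inv]
  refine h.congr_fderiv ?_
  ext v
  simp only [neg_smul, smul_neg, Function.comp_apply, Nat.add_one_sub_one, pow_one, nsmul_eq_mul,
    Nat.cast_ofNat, add_apply, neg_apply, smul_apply, smul_eq_mul, sub_apply]
  field_simp
  ring

theorem fderiv_sq_div_apply_mul_le (hf : DifferentiableAt ℝ f x) (hw : DifferentiableAt ℝ w x)
    (hx : 0 < w x) (v : E) :
    fderiv ℝ (fun y => f y ^ 2 / w y) x v * fderiv ℝ w x v ≤ fderiv ℝ f x v ^ 2 := by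
  rw [(hf.hasFDerivAt.sq_div hw.hasFDerivAt hx.ne').fderiv]
  set a := fderiv ℝ f x v
  set b := fderiv ℝ w x v
  have key : a ^ 2 - ((2 * f x / w x) * a - (f x ^ 2 / w x ^ 2) * b) * b
      = (a - f x * b / w x) ^ 2 := by
    field_simp
    ring
  simp only [sub_apply, smul_apply, smul_eq_mul]
  exact sub_nonneg.mp (key ▸ sq_nonneg _)

end Picone

theorem EuclideanSpace.norm_gradient_sq_eq_sum {ι : Type*} [Fintype ι] [DecidableEq ι]
    (f : EuclideanSpace ℝ ι → ℝ) (x : EuclideanSpace ℝ ι) :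
    ‖gradient f x‖ ^ 2 = ∑ i, fderiv ℝ f x (EuclideanSpace.single i 1) ^ 2 := by
  rw [EuclideanSpace.norm_sq_eq]
  refine Finset.sum_congr rfl fun i _ => ?_
  rw [Real.norm_eq_abs, sq_abs, ← inner_gradient_left, EuclideanSpace.inner_single_right]
  simp

section IntegrationByParts

variable {E : Type*} [NormedAddCommGroup E] [NormedSpace ℝ E] [MeasurableSpace E] [BorelSpace E]
  {μ : Measure E} [μ.IsAddHaarMeasure] {f g : E → ℝ}

theorem integrable_fderiv_apply_mul_of_hasCompactSupport (hf : ContDiff ℝ 1 f)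
    (hfc : HasCompactSupport f) (hg : Continuous g) (v : E) :
    Integrable (fun x => fderiv ℝ f x v * g x) μ :=
  ((hf.continuous_fderiv_apply_const one_ne_zero v).mul hg).integrable_of_hasCompactSupport
    (hfc.fderiv_apply (𝕜 := ℝ) v).mul_right

theorem integral_mul_fderiv_eq_neg_fderiv_mul_of_hasCompactSupport [FiniteDimensional ℝ E]
    (hf : ContDiff ℝ 1 f) (hfc : HasCompactSupport f) (hg : ContDiff ℝ 1 g) (v : E) :
    ∫ x, f x * fderiv ℝ g x v ∂μ = -∫ x, fderiv ℝ f x v * g x ∂μ :=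
  integral_mul_fderiv_eq_neg_fderiv_mul_of_integrable
    (integrable_fderiv_apply_mul_of_hasCompactSupport hf hfc hg.continuous v)
    ((hf.continuous.mul (hg.continuous_fderiv_apply_const one_ne_zero v)
      ).integrable_of_hasCompactSupport hfc.mul_right)
    ((hf.continuous.mul hg.continuous).integrable_of_hasCompactSupport hfc.mul_right)
    (fun _ _ => (hf.differentiable one_ne_zero).differentiableAt)
    (fun _ _ => (hg.differentiable one_ne_zero).differentiableAt)

end IntegrationByParts

section Laplacian

variable {m : ℕ} {w : EuclideanSpace ℝ (Fin m) → ℝ}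

theorem ContDiff.continuous_laplacian (hw : ContDiff ℝ 2 w) : Continuous (laplacian w) :=
  continuous_finsetSum _ fun _ _ =>
    ((hw.fderiv_apply_const (n := 1) _).continuous_fderiv_apply_const one_ne_zero _)

theorem integral_mul_laplacian_eq_neg_integral_sum {μ : Measure (EuclideanSpace ℝ (Fin m))}
    [μ.IsAddHaarMeasure] {g : EuclideanSpace ℝ (Fin m) → ℝ} (hg : ContDiff ℝ 1 g)
    (hgc : HasCompactSupport g) (hw : ContDiff ℝ 2 w) :
    ∫ x, g x * laplacian w x ∂μ = -∫ x, ∑ i, fderiv ℝ g x (EuclideanSpace.single i 1) *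
      fderiv ℝ w x (EuclideanSpace.single i 1) ∂μ := by
  have hwi (v) : ContDiff ℝ 1 (fderiv ℝ w · v) := hw.fderiv_apply_const (n := 1) v
  simp only [laplacian, Finset.mul_sum]
  rw [integral_finsetSum _ fun i _ => ?hessian_term,
    integral_finsetSum _ fun i _ => ?gradient_term, ← Finset.sum_neg_distrib]
  · exact Finset.sum_congr rfl fun i _ =>
      integral_mul_fderiv_eq_neg_fderiv_mul_of_hasCompactSupport hg hgc (hwi _) _
  case gradient_term =>
    exact integrable_fderiv_apply_mul_of_hasCompactSupport hg hgc (hwi _).continuous _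
  case hessian_term =>
    exact (hg.continuous.mul ((hwi _).continuous_fderiv_apply_const one_ne_zero _)
      ).integrable_of_hasCompactSupport hgc.mul_right

end Laplacian

theorem allegretto_piepenbrink_general (m : ℕ)
    (V : EuclideanSpace ℝ (Fin m) → ℝ) (hV : Continuous V)
    (w : EuclideanSpace ℝ (Fin m) → ℝ) (hw : ContDiff ℝ 2 w)
    (hwpos : ∀ x, 0 < w x)
    (hsuper : ∀ x, laplacian w x + V x * w x ≤ 0)
    (φ : EuclideanSpace ℝ (Fin m) → ℝ) (hφ : ContDiff ℝ 1 φ)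
    (hφc : HasCompactSupport φ) :
    ∫ x, V x * (φ x) ^ 2 ≤ ∫ x, ‖gradient φ x‖ ^ 2 := by
  set e := fun i : Fin m => EuclideanSpace.single i (1 : ℝ)
  set g := fun x => φ x ^ 2 / w x
  have hg : ContDiff ℝ 1 g := (hφ.pow 2).div (hw.of_le one_le_two) fun x => (hwpos x).ne'
  have hgc : HasCompactSupport g := hφc.mono fun x hx h0 => hx (by simp [g, h0])
  have hVφ : Integrable fun x => V x * φ x ^ 2 :=
    (hV.mul (hφ.continuous.pow 2)).integrable_of_hasCompactSupport
      (hφc.fun_pow two_ne_zero).mul_left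
  have hgΔw : Integrable fun x => g x * laplacian w x :=
    (hg.continuous.mul hw.continuous_laplacian).integrable_of_hasCompactSupport hgc.mul_right
  have hgw : Integrable fun x => ∑ i, fderiv ℝ g x (e i) * fderiv ℝ w x (e i) :=
    integrable_finsetSum _ fun i _ => integrable_fderiv_apply_mul_of_hasCompactSupport hg hgc
      (hw.continuous_fderiv_apply_const two_ne_zero (e i)) (e i)
  have hφφ : Integrable fun x => ∑ i, fderiv ℝ φ x (e i) ^ 2 :=
    integrable_finsetSum _ fun i _ =>
      ((hφ.continuous_fderiv_apply_const one_ne_zero (e i)).pow 2).integrable_of_hasCompactSupport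
        ((hφc.fderiv_apply (𝕜 := ℝ) (e i)).fun_pow two_ne_zero)
  calc ∫ x, V x * φ x ^ 2
      ≤ ∫ x, -(g x * laplacian w x) :=
        integral_mono hVφ hgΔw.neg fun x => mul_sq_le_neg_sq_div_mul (hwpos x) (hsuper x)
    _ = ∫ x, ∑ i, fderiv ℝ g x (e i) * fderiv ℝ w x (e i) := by
        rw [integral_neg, integral_mul_laplacian_eq_neg_integral_sum hg hgc hw, neg_neg]
    _ ≤ ∫ x, ∑ i, fderiv ℝ φ x (e i) ^ 2 :=
        integral_mono hgw hφφ fun x => Finset.sum_le_sum fun i _ => fderiv_sq_div_apply_mul_le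
          (hφ.differentiable one_ne_zero x) (hw.differentiable two_ne_zero x) (hwpos x) (e i)
    _ = ∫ x, ‖gradient φ x‖ ^ 2 := by
        simp only [EuclideanSpace.norm_gradient_sq_eq_sum, e]

/-- Implication i) ⇒ iii) of Proposition 3.4 of the paper (Allegretto–Piepenbrink) with
`p = 2`, `f ≡ 0`, `M = ℝ^m`: a positive classical supersolution of `Δw + V w ≤ 0` forces
the quadratic form `Q_V(φ) = ∫‖∇φ‖² − ∫Vφ²` to be non-negative. -/
theorem allegretto_piepenbrink (m : ℕ) (hm : 1 ≤ m)
    (V : EuclideanSpace ℝ (Fin m) → ℝ) (hV : Continuous V)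
    (w : EuclideanSpace ℝ (Fin m) → ℝ) (hw : ContDiff ℝ 2 w)
    (hwpos : ∀ x, 0 < w x)
    (hsuper : ∀ x, laplacian w x + V x * w x ≤ 0)
    (φ : EuclideanSpace ℝ (Fin m) → ℝ) (hφ : ContDiff ℝ 1 φ)
    (hφc : HasCompactSupport φ) :
    ∫ x, V x * (φ x) ^ 2 ≤ ∫ x, ‖gradient φ x‖ ^ 2 :=
  allegretto_piepenbrink_general m V hV w hw hwpos hsuper φ hφ hφc
end

section
/- Let m ≥ 1 be an integer, let Ω ⊆ ℝ^m be open, and let u : Ω → ℝ be twice continuously differentiable with u(x) > 0 and Δu(x) ≤ 0 for all x ∈ Ω, where Δ denotes the Euclidean Laplacian. Then for every continuously differentiable function φ : ℝ^m → ℝ with compact support contained in Ω one has (1/4)·∫_Ω (‖∇u(x)‖²/u(x)²)·φ(x)² dx ≤ ∫_Ω ‖∇φ(x)‖² dx, with integrals taken with respect to Lebesgue measure. -/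
/-!
Test the superharmonicity of `u` against `w = φ² / u ≥ 0`. One integration by parts (done for a
smooth cutoff of `u` that agrees with `u` near `tsupport φ`, so that no boundary terms appear)
gives `0 ≤ ∫ ⟪∇w, ∇u⟫`. Since `∇w = 2 (φ/u) ∇φ - (φ/u)² ∇u`, this says
`∫ (φ/u)² ‖∇u‖² ≤ ∫ 2 (φ/u) ⟪∇φ, ∇u⟫`, and Young's inequality bounds the right-hand side by
`2 ∫ ‖∇φ‖² + ½ ∫ (φ/u)² ‖∇u‖²`.
-/

open MeasureTheory

open Function Topology
open scoped Manifold RealInnerProductSpace Gradient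

theorem gradient_eq_zero_of_notMem_tsupport {F : Type*} [NormedAddCommGroup F]
    [InnerProductSpace ℝ F] [CompleteSpace F] {f : F → ℝ} {x : F} (h : x ∉ tsupport f) :
    ∇ f x = 0 := by
  simp [gradient, fderiv_of_notMem_tsupport ℝ h]

theorem ContDiffOn.continuousOn_gradient {F : Type*} [NormedAddCommGroup F]
    [InnerProductSpace ℝ F] [CompleteSpace F] {n : WithTop ℕ∞} {f : F → ℝ} {s : Set F}
    (hf : ContDiffOn ℝ n f s) (hs : IsOpen s) (hn : 1 ≤ n) : ContinuousOn (∇ f) s :=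
  (InnerProductSpace.toDual ℝ F).symm.continuous.comp_continuousOn
    (hf.continuousOn_fderiv_of_isOpen hs hn)

theorem inner_gradient_eq_sum {ι : Type*} [Fintype ι] [DecidableEq ι]
    (f g : EuclideanSpace ℝ ι → ℝ) (x : EuclideanSpace ℝ ι) :
    ⟪∇ f x, ∇ g x⟫ = ∑ i, fderiv ℝ f x (EuclideanSpace.single i 1) *
      fderiv ℝ g x (EuclideanSpace.single i 1) := by
  have hcoord : ∀ (h : EuclideanSpace ℝ ι → ℝ) i,
      ∇ h x i = fderiv ℝ h x (EuclideanSpace.single i 1) := by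
    intro h i
    rw [← inner_gradient_left, EuclideanSpace.inner_single_right]
    simp
  simp only [PiLp.inner_apply, hcoord]
  simp [mul_comm]

theorem ContDiffOn.contDiff_of_tsupport_subset {E F : Type*} [NormedAddCommGroup E]
    [NormedSpace ℝ E] [NormedAddCommGroup F] [NormedSpace ℝ F] {n : WithTop ℕ∞} {f : E → F}
    {s : Set E} (hf : ContDiffOn ℝ n f s) (hs : IsOpen s) (hfs : tsupport f ⊆ s) :
    ContDiff ℝ n f := by
  refine contDiff_iff_contDiffAt.2 fun x => ?_
  by_cases hx : x ∈ tsupport f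
  · exact hf.contDiffAt (hs.mem_nhds (hfs hx))
  · exact contDiffAt_const.congr_of_eventuallyEq (notMem_tsupport_iff_eventuallyEq.1 hx)

theorem ContDiffOn.exists_contDiff_eventuallyEq_nhdsSet {E F : Type*} [NormedAddCommGroup E]
    [NormedSpace ℝ E] [FiniteDimensional ℝ E] [NormedAddCommGroup F] [NormedSpace ℝ F]
    {n : ℕ∞} {f : E → F} {s K : Set E} (hf : ContDiffOn ℝ n f s) (hs : IsOpen s)
    (hK : IsCompact K) (hKs : K ⊆ s) :
    ∃ g : E → F, ContDiff ℝ n g ∧ g =ᶠ[𝓝ˢ K] f := by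
  obtain ⟨L, hL, hKL, hLs⟩ := exists_compact_between hK hs hKs
  obtain ⟨χ, hχK, hχL, -⟩ :=
    exists_contMDiffMap_one_nhds_of_subset_interior 𝓘(ℝ, E) (n := n) hK.isClosed hKL
  have hχ : ContDiff ℝ n χ := contMDiff_iff_contDiff.1 χ.contMDiff
  have hχs : tsupport χ ⊆ s :=
    (closure_minimal (fun x (hx : χ x ≠ 0) => by_contra fun hxL => hx (hχL x hxL))
      hL.isClosed).trans hLs
  refine ⟨fun x => χ x • f x, ?_, ?_⟩
  · exact (hχ.contDiffOn.smul hf).contDiff_of_tsupport_subset hs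
      ((tsupport_smul_subset_left _ _).trans hχs)
  · filter_upwards [hχK] with x hx
    simp [hx]

theorem ContinuousOn.integrableOn_of_support_subset_isCompact {X E : Type*}
    [TopologicalSpace X] [T2Space X] [MeasurableSpace X] [OpensMeasurableSpace X]
    [NormedAddCommGroup E] {μ : Measure X} [IsFiniteMeasureOnCompacts μ] {f : X → E}
    {s K : Set X} (hf : ContinuousOn f s) (hK : IsCompact K) (hKs : K ⊆ s)
    (hfK : support f ⊆ K) : IntegrableOn f s μ :=
  ((integrableOn_iff_integrable_of_support_subset hfK).1
    ((hf.mono hKs).integrableOn_compact hK)).integrableOn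

theorem Filter.EventuallyEq.laplacian_eq {m : ℕ} {u v : EuclideanSpace ℝ (Fin m) → ℝ}
    {x : EuclideanSpace ℝ (Fin m)} (h : u =ᶠ[𝓝 x] v) : laplacian u x = laplacian v x := by
  refine Finset.sum_congr rfl fun i _ => ?_
  have hD : (fun y => fderiv ℝ u y (EuclideanSpace.single i 1)) =ᶠ[𝓝 x]
      fun y => fderiv ℝ v y (EuclideanSpace.single i 1) := by
    filter_upwards [h.fderiv (𝕜 := ℝ)] with y hy
    rw [hy]
  rw [hD.fderiv_eq]

theorem integral_mul_laplacian_eq_neg_integral_inner_gradient {m : ℕ}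
    {w U : EuclideanSpace ℝ (Fin m) → ℝ} (hw : ContDiff ℝ 1 w) (hwc : HasCompactSupport w)
    (hU : ContDiff ℝ 2 U) :
    ∫ x, w x * laplacian U x = -∫ x, ⟪∇ w x, ∇ U x⟫ := by
  set e : Fin m → EuclideanSpace ℝ (Fin m) := fun i => EuclideanSpace.single i 1
  have hmul_integrable {f g : EuclideanSpace ℝ (Fin m) → ℝ} (hfc : HasCompactSupport f)
      (hf : Continuous f) (hg : Continuous g) : Integrable fun x => f x * g x :=
    (hf.mul hg).integrable_of_hasCompactSupport hfc.mul_right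
  have hDU (i : Fin m) : ContDiff ℝ 1 fun x => fderiv ℝ U x (e i) :=
    (hU.fderiv_right le_rfl).clm_apply contDiff_const
  have hDw (i : Fin m) : Continuous fun x => fderiv ℝ w x (e i) :=
    (hw.continuous_fderiv one_ne_zero).clm_apply continuous_const
  have hDDU (i : Fin m) :
      Continuous fun x => fderiv ℝ (fun y => fderiv ℝ U y (e i)) x (e i) :=
    ((hDU i).continuous_fderiv one_ne_zero).clm_apply continuous_const
  have hparts (i : Fin m) :
      ∫ x, w x * fderiv ℝ (fun y => fderiv ℝ U y (e i)) x (e i) =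
        -∫ x, fderiv ℝ w x (e i) * fderiv ℝ U x (e i) :=
    integral_mul_fderiv_eq_neg_fderiv_mul_of_integrable
      (hmul_integrable (hwc.fderiv_apply (𝕜 := ℝ) (e i)) (hDw i) (hDU i).continuous)
      (hmul_integrable hwc hw.continuous (hDDU i))
      (hmul_integrable hwc hw.continuous (hDU i).continuous)
      (fun x _ => hw.differentiable one_ne_zero x)
      (fun x _ => (hDU i).differentiable one_ne_zero x)
  calc ∫ x, w x * laplacian U x
      = ∑ i, ∫ x, w x * fderiv ℝ (fun y => fderiv ℝ U y (e i)) x (e i) := by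
        simp only [laplacian, Finset.mul_sum]
        exact integral_finsetSum _ fun i _ => hmul_integrable hwc hw.continuous (hDDU i)
    _ = -∑ i, ∫ x, fderiv ℝ w x (e i) * fderiv ℝ U x (e i) := by
        simp only [hparts, Finset.sum_neg_distrib]
    _ = -∫ x, ⟪∇ w x, ∇ U x⟫ := by
        simp only [inner_gradient_eq_sum]
        rw [integral_finsetSum _ fun i _ =>
          hmul_integrable (hwc.fderiv_apply (𝕜 := ℝ) (e i)) (hDw i) (hDU i).continuous]

theorem setIntegral_mul_laplacian_eq_neg_setIntegral_inner_gradient {m : ℕ}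
    {Ω : Set (EuclideanSpace ℝ (Fin m))} (hΩ : IsOpen Ω) {v w : EuclideanSpace ℝ (Fin m) → ℝ}
    (hv : ContDiffOn ℝ 2 v Ω) (hw : ContDiff ℝ 1 w) (hwc : HasCompactSupport w)
    (hwΩ : tsupport w ⊆ Ω) :
    ∫ x in Ω, w x * laplacian v x = -∫ x in Ω, ⟪∇ w x, ∇ v x⟫ := by
  obtain ⟨U, hU, hUv⟩ := hv.exists_contDiff_eventuallyEq_nhdsSet (n := 2) hΩ hwc hwΩ
  have hlap (x) : w x * laplacian v x = w x * laplacian U x := by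
    by_cases hx : x ∈ tsupport w
    · rw [(hUv.filter_mono (nhds_le_nhdsSet hx)).laplacian_eq]
    · rw [image_eq_zero_of_notMem_tsupport hx, zero_mul, zero_mul]
  have hgrad (x) : ⟪∇ w x, ∇ v x⟫ = ⟪∇ w x, ∇ U x⟫ := by
    by_cases hx : x ∈ tsupport w
    · rw [(hUv.filter_mono (nhds_le_nhdsSet hx)).gradient_eq]
    · rw [gradient_eq_zero_of_notMem_tsupport hx, inner_zero_left, inner_zero_left]
  have hwΩc {x} (hx : x ∉ Ω) : x ∉ tsupport w := fun h => hx (hwΩ h)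
  rw [setIntegral_eq_integral_of_forall_compl_eq_zero fun x hx => by
      rw [image_eq_zero_of_notMem_tsupport (hwΩc hx), zero_mul],
    setIntegral_eq_integral_of_forall_compl_eq_zero fun x hx => by
      rw [gradient_eq_zero_of_notMem_tsupport (hwΩc hx), inner_zero_left]]
  simp only [hlap, hgrad]
  exact integral_mul_laplacian_eq_neg_integral_inner_gradient hw hwc hU

theorem setIntegral_inner_gradient_nonneg_of_laplacian_nonpos {m : ℕ}
    {Ω : Set (EuclideanSpace ℝ (Fin m))} (hΩ : IsOpen Ω) {v w : EuclideanSpace ℝ (Fin m) → ℝ}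
    (hv : ContDiffOn ℝ 2 v Ω) (hsuper : ∀ x ∈ Ω, laplacian v x ≤ 0) (hw : ContDiff ℝ 1 w)
    (hwc : HasCompactSupport w) (hwΩ : tsupport w ⊆ Ω) (hw0 : ∀ x ∈ Ω, 0 ≤ w x) :
    0 ≤ ∫ x in Ω, ⟪∇ w x, ∇ v x⟫ := by
  have hneg : ∫ x in Ω, w x * laplacian v x ≤ 0 := setIntegral_nonpos hΩ.measurableSet
    fun x hx => mul_nonpos_of_nonneg_of_nonpos (hw0 x hx) (hsuper x hx)
  rw [setIntegral_mul_laplacian_eq_neg_setIntegral_inner_gradient hΩ hv hw hwc hwΩ] at hneg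
  linarith

theorem HasFDerivAt.sq_div_s6 {E : Type*} [NormedAddCommGroup E] [NormedSpace ℝ E]
    {φ u : E → ℝ} {φ' u' : E →L[ℝ] ℝ} {x : E} (hφ : HasFDerivAt φ φ' x)
    (hu : HasFDerivAt u u' x) (hux : u x ≠ 0) :
    HasFDerivAt (fun y => φ y ^ 2 / u y)
      ((2 * (φ x / u x)) • φ' - (φ x / u x) ^ 2 • u') x := by
  have hinv : HasFDerivAt (fun y => (u y)⁻¹) (-(u x ^ 2)⁻¹ • u') x :=
    (hasDerivAt_inv hux).comp_hasFDerivAt x hu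
  simp only [div_eq_mul_inv]
  refine ((hφ.pow 2).mul hinv).congr_fderiv ?_
  ext v
  simp only [Nat.add_one_sub_one, pow_one, nsmul_eq_mul, Nat.cast_ofNat, add_apply, smul_apply,
    smul_eq_mul, neg_mul, mul_neg, sub_apply]
  field_simp
  ring

theorem support_sq_div_subset {α : Type*} (φ u : α → ℝ) :
    support (fun x => φ x ^ 2 / u x) ⊆ support φ :=
  fun x hx hφx => hx (by simp [hφx])

theorem two_mul_mul_inner_le {F : Type*} [NormedAddCommGroup F] [InnerProductSpace ℝ F]
    (a b : F) (r : ℝ) : 2 * r * ⟪a, b⟫ ≤ 2 * ‖a‖ ^ 2 + 1 / 2 * (r ^ 2 * ‖b‖ ^ 2) := by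
  have h : 0 ≤ ‖(2 : ℝ) • a - r • b‖ ^ 2 := sq_nonneg _
  rw [norm_sub_sq_real, norm_smul, norm_smul, real_inner_smul_left, real_inner_smul_right]
    at h
  simp only [Real.norm_eq_abs, mul_pow, sq_abs] at h
  linarith

theorem inner_gradient_sq_div_le {F : Type*} [NormedAddCommGroup F] [InnerProductSpace ℝ F]
    [CompleteSpace F] {φ u : F → ℝ} {x : F} (hφ : DifferentiableAt ℝ φ x)
    (hu : DifferentiableAt ℝ u x) (hux : u x ≠ 0) :
    ⟪∇ (fun y => φ y ^ 2 / u y) x, ∇ u x⟫ ≤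
      2 * ‖∇ φ x‖ ^ 2 - 1 / 2 * (‖∇ u x‖ ^ 2 / u x ^ 2 * φ x ^ 2) := by
  rw [inner_gradient_left, (hφ.hasFDerivAt.sq_div_s6 hu.hasFDerivAt hux).fderiv]
  simp only [sub_apply, smul_apply, smul_eq_mul, ← inner_gradient_left,
    real_inner_self_eq_norm_sq]
  have hyoung := two_mul_mul_inner_le (∇ φ x) (∇ u x) (φ x / u x)
  have hF : ‖∇ u x‖ ^ 2 / u x ^ 2 * φ x ^ 2 = (φ x / u x) ^ 2 * ‖∇ u x‖ ^ 2 := by ring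
  rw [hF]
  linarith

theorem setIntegral_inner_gradient_sq_div_le {F : Type*} [NormedAddCommGroup F]
    [InnerProductSpace ℝ F] [CompleteSpace F] [MeasurableSpace F] [OpensMeasurableSpace F]
    {μ : Measure F} [IsFiniteMeasureOnCompacts μ] {Ω : Set F} (hΩ : IsOpen Ω) {u φ : F → ℝ}
    (hu : ContDiffOn ℝ 1 u Ω) (hu0 : ∀ x ∈ Ω, u x ≠ 0) (hφ : ContDiff ℝ 1 φ)
    (hφc : HasCompactSupport φ) (hφΩ : tsupport φ ⊆ Ω) :
    ∫ x in Ω, ⟪∇ (fun y => φ y ^ 2 / u y) x, ∇ u x⟫ ∂μ ≤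
      2 * ∫ x in Ω, ‖∇ φ x‖ ^ 2 ∂μ - 1 / 2 * ∫ x in Ω, ‖∇ u x‖ ^ 2 / u x ^ 2 * φ x ^ 2 ∂μ := by
  have hintegrable {f : F → ℝ} (hf : ContinuousOn f Ω) (hfφ : support f ⊆ tsupport φ) :
      IntegrableOn f Ω μ :=
    hf.integrableOn_of_support_subset_isCompact hφc hφΩ hfφ
  have hgradu := hu.continuousOn_gradient hΩ le_rfl
  have hgradφ := hφ.contDiffOn.continuousOn_gradient hΩ le_rfl
  have hgradw : ContinuousOn (∇ fun y => φ y ^ 2 / u y) Ω :=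
    ((hφ.pow 2).contDiffOn.div hu hu0).continuousOn_gradient hΩ le_rfl
  have hHardy : IntegrableOn (fun x => ‖∇ u x‖ ^ 2 / u x ^ 2 * φ x ^ 2) Ω μ :=
    hintegrable (((hgradu.norm.pow 2).div (hu.continuousOn.pow 2) fun x hx =>
      pow_ne_zero 2 (hu0 x hx)).mul (hφ.continuous.pow 2).continuousOn)
      fun x hx => subset_tsupport φ fun hφx => hx (by simp [hφx])
  have hDφ : IntegrableOn (fun x => ‖∇ φ x‖ ^ 2) Ω μ :=
    hintegrable (hgradφ.norm.pow 2) fun x hx =>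
      by_contra fun h => hx (by simp [gradient_eq_zero_of_notMem_tsupport h])
  have hcross : IntegrableOn (fun x => ⟪∇ (fun y => φ y ^ 2 / u y) x, ∇ u x⟫) Ω μ :=
    hintegrable (hgradw.inner hgradu) fun x hx => closure_mono (support_sq_div_subset φ u)
      (by_contra fun h => hx (by simp [gradient_eq_zero_of_notMem_tsupport h]))
  rw [← integral_const_mul, ← integral_const_mul,
    ← integral_sub (hDφ.const_mul 2) (hHardy.const_mul _)]
  exact setIntegral_mono_on hcross ((hDφ.const_mul 2).sub (hHardy.const_mul _))
    hΩ.measurableSet fun x hx => inner_gradient_sq_div_le (hφ.differentiable one_ne_zero x)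
      ((hu.differentiableOn one_ne_zero).differentiableAt (hΩ.mem_nhds hx)) (hu0 x hx)

theorem hardy_superharmonic_general (m : ℕ)
    (Ω : Set (EuclideanSpace ℝ (Fin m))) (hΩ : IsOpen Ω)
    (u : EuclideanSpace ℝ (Fin m) → ℝ)
    (hu : ContDiffOn ℝ 2 u Ω) (hupos : ∀ x ∈ Ω, 0 < u x)
    (hsuper : ∀ x ∈ Ω, laplacian u x ≤ 0)
    (φ : EuclideanSpace ℝ (Fin m) → ℝ) (hφ : ContDiff ℝ 1 φ)
    (hφc : HasCompactSupport φ) (hφsupp : tsupport φ ⊆ Ω) :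
    (1 / 4) * ∫ x in Ω, (‖gradient u x‖ ^ 2 / (u x) ^ 2) * (φ x) ^ 2 ≤
      ∫ x in Ω, ‖gradient φ x‖ ^ 2 := by
  have hu0 : ∀ x ∈ Ω, u x ≠ 0 := fun x hx => (hupos x hx).ne'
  set w := fun x => φ x ^ 2 / u x
  have hwφ : support w ⊆ support φ := support_sq_div_subset φ u
  have hwΩ : tsupport w ⊆ Ω := (closure_mono hwφ).trans hφsupp
  have hw : ContDiff ℝ 1 w :=
    ((hφ.pow 2).contDiffOn.div (hu.of_le one_le_two) hu0).contDiff_of_tsupport_subset hΩ hwΩ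
  have hweak : 0 ≤ ∫ x in Ω, ⟪∇ w x, ∇ u x⟫ :=
    setIntegral_inner_gradient_nonneg_of_laplacian_nonpos hΩ hu hsuper hw (hφc.mono hwφ) hwΩ
      fun x hx => div_nonneg (sq_nonneg _) (hupos x hx).le
  have hpicone := setIntegral_inner_gradient_sq_div_le (μ := volume) hΩ (hu.of_le one_le_two)
    hu0 hφ hφc hφsupp
  linarith

/-- Item 5) of Proposition 3.5 of the paper (Hardy inequality (3.27)) with `p = 2`,
`f ≡ 0`, for a classical positive superharmonic function `u` on an open `Ω ⊆ ℝ^m`: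
`(1/4) ∫_Ω (‖∇u‖²/u²) φ² ≤ ∫_Ω ‖∇φ‖²` for every `C¹` function `φ` with compact
support contained in `Ω`. -/
theorem hardy_superharmonic (m : ℕ) (hm : 1 ≤ m)
    (Ω : Set (EuclideanSpace ℝ (Fin m))) (hΩ : IsOpen Ω)
    (u : EuclideanSpace ℝ (Fin m) → ℝ)
    (hu : ContDiffOn ℝ 2 u Ω) (hupos : ∀ x ∈ Ω, 0 < u x)
    (hsuper : ∀ x ∈ Ω, laplacian u x ≤ 0)
    (φ : EuclideanSpace ℝ (Fin m) → ℝ) (hφ : ContDiff ℝ 1 φ)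
    (hφc : HasCompactSupport φ) (hφsupp : tsupport φ ⊆ Ω) :
    (1 / 4) * ∫ x in Ω, (‖gradient u x‖ ^ 2 / (u x) ^ 2) * (φ x) ^ 2 ≤
      ∫ x in Ω, ‖gradient φ x‖ ^ 2 :=
  hardy_superharmonic_general m Ω hΩ u hu hupos hsuper φ hφ hφc hφsupp
end

section
/- Let m ≥ 1 be an integer, let p > 1 be real, let Ω ⊆ ℝ^m be open, and let u : Ω → ℝ be twice continuously differentiable with u(x) > 0 and ∇u(x) ≠ 0 for all x ∈ Ω, and suppose div(‖∇u‖^(p−2)·∇u)(x) ≤ 0 for all x ∈ Ω. Then for every continuously differentiable function φ : ℝ^m → ℝ with compact support contained in Ω one has ((p−1)/p)^p · ∫_Ω (‖∇u(x)‖/u(x))^p · |φ(x)|^p dx ≤ ∫_Ω ‖∇φ(x)‖^p dx, with integrals taken with respect to Lebesgue measure. -/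
/-!
Picone's argument. With `V = ‖∇u‖^(p-2) ∇u` and `ψ = |φ|^p u^(1-p)`, the field `ψ V` is `C¹` with
compact support in `Ω`, so `∫ div (ψ V) = 0`. Since `div (ψ V) = ψ Δ_p u + ∇ψ · V` and
`Δ_p u ≤ 0`, one gets `div (ψ V) ≤ ∇ψ · V ≤ p a^(p-1) b - (p-1) a^p` with `a = |φ| ‖∇u‖ / u` and
`b = ‖∇φ‖`. Young's inequality `p c^(p-1) b ≤ (p-1) c^p + b^p` at `c = s a`, `s = (p-1)/p`, turns
this into `s^(p-1) div (ψ V) ≤ b^p - s^p a^p`, and integrating over `Ω` gives the inequality.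
-/

open MeasureTheory

/-- Divergence of a vector field on `ℝ^m`: the sum of the partial derivatives of the
coordinate functions in the directions of the standard basis. -/
noncomputable def diverg {m : ℕ}
    (F : EuclideanSpace ℝ (Fin m) → EuclideanSpace ℝ (Fin m))
    (x : EuclideanSpace ℝ (Fin m)) : ℝ :=
  ∑ i, fderiv ℝ (fun y => F y i) x (EuclideanSpace.single i (1 : ℝ))

open InnerProductSpace

theorem contDiff_of_tsupport {𝕜 E F : Type*} [NontriviallyNormedField 𝕜]
    [NormedAddCommGroup E] [NormedSpace 𝕜 E] [NormedAddCommGroup F] [NormedSpace 𝕜 F]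
    {n : WithTop ℕ∞} {f : E → F}
    (hf : ∀ x ∈ tsupport f, ContDiffAt 𝕜 n f x) : ContDiff 𝕜 n f :=
  contDiff_iff_contDiffAt.2 fun x => by
    by_cases hx : x ∈ tsupport f
    · exact hf x hx
    · exact contDiffAt_const.congr_of_eventuallyEq (notMem_tsupport_iff_eventuallyEq.1 hx)

section IntegralFDeriv

variable {E G : Type*} [NormedAddCommGroup E] [NormedSpace ℝ E] [MeasurableSpace E]
  [BorelSpace E] [NormedAddCommGroup G] [NormedSpace ℝ G] {μ : Measure E} [μ.IsAddHaarMeasure]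
  {g : E → G}

theorem integrable_fderiv_apply (hg : ContDiff ℝ 1 g) (hc : HasCompactSupport g) (v : E) :
    Integrable (fun x => fderiv ℝ g x v) μ :=
  ((hg.continuous_fderiv one_ne_zero).clm_apply continuous_const)
    |>.integrable_of_hasCompactSupport (hc.fderiv_apply (𝕜 := ℝ) v)

theorem integral_fderiv_apply_eq_zero [FiniteDimensional ℝ E] (hg : ContDiff ℝ 1 g)
    (hc : HasCompactSupport g) (v : E) : ∫ x, fderiv ℝ g x v ∂μ = 0 := by
  have h := integral_smul_fderiv_eq_neg_fderiv_smul_of_integrable (μ := μ) (v := v)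
    (f := fun _ : E => (1 : ℝ)) (by simp) (by simpa using integrable_fderiv_apply hg hc v)
    (by simpa using hg.continuous.integrable_of_hasCompactSupport hc)
    (fun x _ => differentiableAt_const _) (fun x _ => hg.differentiable one_ne_zero x)
  simpa using h

end IntegralFDeriv

section Divergence

variable {m : ℕ} {F : EuclideanSpace ℝ (Fin m) → EuclideanSpace ℝ (Fin m)}
  {x : EuclideanSpace ℝ (Fin m)}

theorem ContDiff.euclidean_apply {n : WithTop ℕ∞} (hF : ContDiff ℝ n F) (i : Fin m) :
    ContDiff ℝ n (fun y => F y i) :=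
  (EuclideanSpace.proj (𝕜 := ℝ) i).contDiff.comp hF

theorem HasCompactSupport.euclidean_apply (hc : HasCompactSupport F) (i : Fin m) :
    HasCompactSupport (fun y => F y i) :=
  hc.comp_left (g := fun v : EuclideanSpace ℝ (Fin m) => v i) rfl

theorem integrable_diverg (hF : ContDiff ℝ 1 F) (hc : HasCompactSupport F) :
    Integrable (diverg F) :=
  integrable_finsetSum _ fun i _ =>
    integrable_fderiv_apply (hF.euclidean_apply i) (hc.euclidean_apply i) _

theorem integral_diverg_eq_zero (hF : ContDiff ℝ 1 F) (hc : HasCompactSupport F) :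
    ∫ x, diverg F x = 0 := by
  unfold diverg
  rw [integral_finsetSum _ fun i _ =>
    integrable_fderiv_apply (hF.euclidean_apply i) (hc.euclidean_apply i) _]
  exact Finset.sum_eq_zero fun i _ =>
    integral_fderiv_apply_eq_zero (hF.euclidean_apply i) (hc.euclidean_apply i) _

theorem diverg_eq_zero_of_notMem_tsupport (hx : x ∉ tsupport F) : diverg F x = 0 := by
  refine Finset.sum_eq_zero fun i _ => ?_
  have hxi : x ∉ tsupport (fun y => F y i) :=
    fun h => hx (tsupport_comp_subset (g := fun v : EuclideanSpace ℝ (Fin m) => v i) rfl F h)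
  rw [fderiv_of_notMem_tsupport ℝ hxi, zero_apply]

theorem diverg_smul {ψ : EuclideanSpace ℝ (Fin m) → ℝ} (hψ : DifferentiableAt ℝ ψ x)
    (hF : DifferentiableAt ℝ F x) :
    diverg (fun y => ψ y • F y) x = ψ x * diverg F x + fderiv ℝ ψ x (F x) := by
  have hFi (i : Fin m) : DifferentiableAt ℝ (fun y => F y i) x :=
    (EuclideanSpace.proj (𝕜 := ℝ) i).differentiableAt.comp x hF
  have hψF :
      fderiv ℝ ψ x (F x) = ∑ i, fderiv ℝ ψ x (EuclideanSpace.single i 1) * F x i := by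
    conv_lhs => rw [← (EuclideanSpace.basisFun (Fin m) ℝ).sum_repr (F x)]
    simp [map_sum, mul_comm]
  simp only [diverg, PiLp.smul_apply, smul_eq_mul]
  rw [hψF, Finset.mul_sum, ← Finset.sum_add_distrib]
  refine Finset.sum_congr rfl fun i _ => ?_
  rw [fderiv_fun_mul hψ (hFi i)]
  simp only [add_apply, smul_apply, smul_eq_mul]
  ring

end Divergence

theorem mul_rpow_sub_one_mul_le {p a b : ℝ} (hp : 1 < p) (ha : 0 ≤ a) (hb : 0 ≤ b) :
    p * a ^ (p - 1) * b ≤ (p - 1) * a ^ p + b ^ p := by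
  have hp0 : 0 < p := by linarith
  have h := Real.geom_mean_le_arith_mean2_weighted (w₁ := (p - 1) / p) (w₂ := 1 / p)
    (by positivity) (by positivity) (Real.rpow_nonneg ha p) (Real.rpow_nonneg hb p)
    (by field_simp; ring)
  rw [← Real.rpow_mul ha, ← Real.rpow_mul hb, mul_div_cancel₀ _ hp0.ne',
    mul_one_div_cancel hp0.ne', Real.rpow_one] at h
  calc p * a ^ (p - 1) * b = p * (a ^ (p - 1) * b) := by ring
    _ ≤ p * ((p - 1) / p * a ^ p + 1 / p * b ^ p) := by gcongr
    _ = (p - 1) * a ^ p + b ^ p := by field_simp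

theorem hardy_constant_mul_le {p a b : ℝ} (hp : 1 < p) (ha : 0 ≤ a) (hb : 0 ≤ b) :
    ((p - 1) / p) ^ (p - 1) * (p * a ^ (p - 1) * b - (p - 1) * a ^ p)
      ≤ b ^ p - ((p - 1) / p * a) ^ p := by
  set s := (p - 1) / p
  have hp0 : 0 < p := by linarith
  have hs : 0 < s := div_pos (by linarith) hp0
  have hsp : s ^ p = s ^ (p - 1) * s := by rw [← Real.rpow_add_one hs.ne', sub_add_cancel]
  have hps : p * s = p - 1 := mul_div_cancel₀ _ hp0.ne'
  have h := mul_rpow_sub_one_mul_le hp (mul_nonneg hs.le ha) hb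
  rw [Real.mul_rpow hs.le ha, Real.mul_rpow hs.le ha, hsp] at h
  rw [Real.mul_rpow hs.le ha, hsp]
  linear_combination h + s ^ (p - 1) * a ^ p * hps

section PiconeWeight

variable {E : Type*} {p : ℝ} {u φ : E → ℝ}

noncomputable def piconeWeight (p : ℝ) (u φ : E → ℝ) (y : E) : ℝ :=
  ‖φ y‖ ^ p * u y ^ (1 - p)

theorem ContDiffAt.piconeWeight [NormedAddCommGroup E] [NormedSpace ℝ E] {x : E} (hp : 1 < p)
    (hφ : ContDiff ℝ 1 φ) (hu : ContDiffAt ℝ 1 u x) (hux : u x ≠ 0) :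
    ContDiffAt ℝ 1 (piconeWeight p u φ) x :=
  (hφ.norm_rpow hp).contDiffAt.mul (hu.rpow_const_of_ne hux)

theorem tsupport_piconeWeight_subset [TopologicalSpace E] (hp : 0 < p) :
    tsupport (piconeWeight p u φ) ⊆ tsupport φ :=
  tsupport_mul_subset_left.trans <|
    tsupport_comp_subset (g := fun t : ℝ => ‖t‖ ^ p) (by simp [hp.ne']) φ

end PiconeWeight

section PFlux

variable {E : Type*} [NormedAddCommGroup E] [InnerProductSpace ℝ E] [CompleteSpace E]
  {p : ℝ} {u φ : E → ℝ} {x : E}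

theorem norm_gradient (f : E → ℝ) (x : E) : ‖gradient f x‖ = ‖fderiv ℝ f x‖ := by
  rw [← toDual_gradient, LinearIsometryEquiv.norm_map]

noncomputable def pFlux (p : ℝ) (u : E → ℝ) (y : E) : E :=
  ‖gradient u y‖ ^ (p - 2) • gradient u y

theorem ContDiffAt.pFlux (p : ℝ) (hu : ContDiffAt ℝ 2 u x) (hx : gradient u x ≠ 0) :
    ContDiffAt ℝ 1 (pFlux p u) x :=
  have hG : ContDiffAt ℝ 1 (gradient u) x :=
    (toDual ℝ E).symm.contDiff.contDiffAt.comp x (hu.fderiv_right le_rfl)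
  ((hG.norm ℝ hx).rpow_const_of_ne (norm_ne_zero_iff.2 hx)).smul hG

theorem fderiv_piconeWeight_pFlux_le (hp : 1 < p) (hφ : Differentiable ℝ φ)
    (hu : DifferentiableAt ℝ u x) (hux : 0 < u x) :
    fderiv ℝ (piconeWeight p u φ) x (pFlux p u x)
      ≤ p * (‖gradient u x‖ / u x * ‖φ x‖) ^ (p - 1) * ‖gradient φ x‖
        - (p - 1) * (‖gradient u x‖ / u x * ‖φ x‖) ^ p := by
  unfold piconeWeight pFlux
  set r := ‖gradient u x‖
  set v := r ^ (p - 2) • gradient u x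
  have hr : 0 ≤ r := norm_nonneg _
  have hA : HasFDerivAt (fun y => ‖φ y‖ ^ p) (fderiv ℝ (fun y => ‖φ y‖ ^ p) x) x :=
    (hφ.norm_rpow hp x).hasFDerivAt
  have hB : HasFDerivAt (fun y => u y ^ (1 - p))
      (((1 - p) * u x ^ (1 - p - 1)) • fderiv ℝ u x) x :=
    (Real.hasDerivAt_rpow_const (Or.inl hux.ne')).comp_hasFDerivAt x hu.hasFDerivAt
  have hDu : fderiv ℝ u x v = r ^ p := by
    rw [← inner_gradient_left, inner_smul_right, real_inner_self_eq_norm_sq,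
      ← Real.rpow_two, ← Real.rpow_add' hr (by linarith), sub_add_cancel]
  have hv : ‖v‖ = r ^ (p - 1) := by
    rw [norm_smul, Real.norm_of_nonneg (Real.rpow_nonneg hr _),
      ← Real.rpow_add_one' hr (by linarith)]
    ring_nf
  have hDφ : fderiv ℝ (fun y => ‖φ y‖ ^ p) x v
      ≤ p * ‖φ x‖ ^ (p - 1) * ‖gradient φ x‖ * r ^ (p - 1) := by
    rw [norm_gradient, ← hv]
    exact (le_abs_self _).trans <| ((fderiv ℝ _ x).le_opNorm v).trans <|
      mul_le_mul_of_nonneg_right (norm_fderiv_norm_rpow_le hφ hp) (norm_nonneg v)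
  rw [(hA.fun_mul hB).fderiv]
  simp only [add_apply, smul_apply, smul_eq_mul, hDu]
  rw [Real.mul_rpow (div_nonneg hr hux.le) (norm_nonneg _),
    Real.mul_rpow (div_nonneg hr hux.le) (norm_nonneg _), Real.div_rpow hr hux.le,
    Real.div_rpow hr hux.le, show 1 - p - 1 = -p by ring, show 1 - p = -(p - 1) by ring,
    Real.rpow_neg hux.le, Real.rpow_neg hux.le]
  linear_combination
    mul_le_mul_of_nonneg_left hDφ (inv_nonneg.2 (Real.rpow_nonneg hux.le (p - 1)))

theorem integrable_norm_gradient_rpow [MeasurableSpace E] [BorelSpace E] {μ : Measure E}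
    [IsFiniteMeasureOnCompacts μ] (hφ : ContDiff ℝ 1 φ) (hφc : HasCompactSupport φ)
    (hp : 0 < p) : Integrable (fun x => ‖gradient φ x‖ ^ p) μ :=
  (((toDual ℝ E).symm.continuous.comp (hφ.continuous_fderiv one_ne_zero)).norm.rpow_const
    fun _ => Or.inr hp.le).integrable_of_hasCompactSupport
    (hφc.fderiv (𝕜 := ℝ) |>.comp_left (g := fun L => ‖(toDual ℝ E).symm L‖ ^ p)
      (by simp [hp.ne']))

end PFlux

section PiconeField

variable {m : ℕ} {p : ℝ} {u φ : EuclideanSpace ℝ (Fin m) → ℝ}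

theorem contDiff_piconeWeight_smul_pFlux {Ω : Set (EuclideanSpace ℝ (Fin m))} (hp : 1 < p)
    (hΩ : IsOpen Ω) (hu : ContDiffOn ℝ 2 u Ω) (hupos : ∀ x ∈ Ω, 0 < u x)
    (hgrad : ∀ x ∈ Ω, gradient u x ≠ 0) (hφ : ContDiff ℝ 1 φ) (hφΩ : tsupport φ ⊆ Ω) :
    ContDiff ℝ 1 (fun y => piconeWeight p u φ y • pFlux p u y) :=
  contDiff_of_tsupport fun x hx =>
    have hxΩ : x ∈ Ω := hφΩ <| tsupport_piconeWeight_subset (by linarith) <|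
      tsupport_smul_subset_left _ _ hx
    have hux : ContDiffAt ℝ 2 u x := hu.contDiffAt (hΩ.mem_nhds hxΩ)
    ((hux.of_le one_le_two).piconeWeight hp hφ (hupos x hxΩ).ne').smul
      (hux.pFlux p (hgrad x hxΩ))

theorem hardy_integrand_le_sub_diverg {x : EuclideanSpace ℝ (Fin m)} (hp : 1 < p)
    (hu : ContDiffAt ℝ 2 u x) (hux : 0 < u x) (hgx : gradient u x ≠ 0)
    (hsuper : diverg (pFlux p u) x ≤ 0) (hφ : ContDiff ℝ 1 φ) :
    ((p - 1) / p) ^ p * ((‖gradient u x‖ / u x) ^ p * |φ x| ^ p)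
      ≤ ‖gradient φ x‖ ^ p
        - ((p - 1) / p) ^ (p - 1) * diverg (fun y => piconeWeight p u φ y • pFlux p u y) x := by
  set s := (p - 1) / p
  have hψV := fderiv_piconeWeight_pFlux_le hp (hφ.differentiable one_ne_zero)
    (hu.differentiableAt (by norm_num)) hux
  have hyoung := hardy_constant_mul_le hp (a := ‖gradient u x‖ / u x * ‖φ x‖)
    (by positivity) (norm_nonneg (gradient φ x))
  have hψdivV : piconeWeight p u φ x * diverg (pFlux p u) x ≤ 0 :=
    mul_nonpos_of_nonneg_of_nonpos (by unfold piconeWeight; positivity) hsuper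
  rw [diverg_smul
    (((hu.of_le one_le_two).piconeWeight hp hφ hux.ne').differentiableAt one_ne_zero)
    ((hu.pFlux p hgx).differentiableAt one_ne_zero)]
  set a := ‖gradient u x‖ / u x * ‖φ x‖
  calc s ^ p * ((‖gradient u x‖ / u x) ^ p * |φ x| ^ p) = (s * a) ^ p := by
        rw [← Real.norm_eq_abs, ← Real.mul_rpow (by positivity) (by positivity),
          ← Real.mul_rpow (by positivity) (by positivity)]
    _ ≤ ‖gradient φ x‖ ^ p
          - s ^ (p - 1) * (p * a ^ (p - 1) * ‖gradient φ x‖ - (p - 1) * a ^ p) := by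
        linarith
    _ ≤ ‖gradient φ x‖ ^ p
          - s ^ (p - 1) * fderiv ℝ (piconeWeight p u φ) x (pFlux p u x) := by
        gcongr
    _ ≤ ‖gradient φ x‖ ^ p - s ^ (p - 1) * (piconeWeight p u φ x * diverg (pFlux p u) x
          + fderiv ℝ (piconeWeight p u φ) x (pFlux p u x)) := by
        gcongr
        linarith

end PiconeField

theorem hardy_pLaplacian_general (m : ℕ) (p : ℝ) (hp : 1 < p)
    (Ω : Set (EuclideanSpace ℝ (Fin m))) (hΩ : IsOpen Ω)
    (u : EuclideanSpace ℝ (Fin m) → ℝ)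
    (hu : ContDiffOn ℝ 2 u Ω) (hupos : ∀ x ∈ Ω, 0 < u x)
    (hgrad : ∀ x ∈ Ω, gradient u x ≠ 0)
    (hsuper : ∀ x ∈ Ω,
      diverg (fun y => ‖gradient u y‖ ^ (p - 2) • gradient u y) x ≤ 0)
    (φ : EuclideanSpace ℝ (Fin m) → ℝ) (hφ : ContDiff ℝ 1 φ)
    (hφc : HasCompactSupport φ) (hφsupp : tsupport φ ⊆ Ω) :
    ((p - 1) / p) ^ p * ∫ x in Ω, (‖gradient u x‖ / u x) ^ p * |φ x| ^ p ≤
      ∫ x in Ω, ‖gradient φ x‖ ^ p := by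
  have hp0 : 0 < p := by linarith
  set W := fun y => piconeWeight p u φ y • pFlux p u y
  have hWφ : tsupport W ⊆ tsupport φ :=
    (tsupport_smul_subset_left _ _).trans (tsupport_piconeWeight_subset hp0)
  have hW : ContDiff ℝ 1 W := contDiff_piconeWeight_smul_pFlux hp hΩ hu hupos hgrad hφ hφsupp
  have hWc : HasCompactSupport W := hφc.mono' ((subset_tsupport W).trans hWφ)
  have hdivW : ∫ x in Ω, diverg W x = 0 := by
    rw [setIntegral_eq_integral_of_forall_compl_eq_zero fun x hx =>
      diverg_eq_zero_of_notMem_tsupport fun h => hx (hφsupp (hWφ h))]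
    exact integral_diverg_eq_zero hW hWc
  have hint :
      Integrable (fun x => ‖gradient φ x‖ ^ p - ((p - 1) / p) ^ (p - 1) * diverg W x) :=
    (integrable_norm_gradient_rpow hφ hφc hp0).sub ((integrable_diverg hW hWc).const_mul _)
  calc ((p - 1) / p) ^ p * ∫ x in Ω, (‖gradient u x‖ / u x) ^ p * |φ x| ^ p
      = ∫ x in Ω, ((p - 1) / p) ^ p * ((‖gradient u x‖ / u x) ^ p * |φ x| ^ p) :=
        (integral_const_mul _ _).symm
    _ ≤ ∫ x in Ω, (‖gradient φ x‖ ^ p - ((p - 1) / p) ^ (p - 1) * diverg W x) := by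
        refine integral_mono_of_nonneg ?_ hint.integrableOn ?_ <;>
          refine ae_restrict_of_forall_mem hΩ.measurableSet fun x hx => ?_
        · have := hupos x hx
          positivity
        · exact hardy_integrand_le_sub_diverg hp (hu.contDiffAt (hΩ.mem_nhds hx)) (hupos x hx)
            (hgrad x hx) (hsuper x hx) hφ
    _ = ∫ x in Ω, ‖gradient φ x‖ ^ p := by
        rw [integral_sub (integrable_norm_gradient_rpow hφ hφc hp0).integrableOn
          ((integrable_diverg hW hWc).const_mul _).integrableOn, integral_const_mul, hdivW,
          mul_zero, sub_zero]

/-- Item 5) of Proposition 3.5 of the paper (Hardy inequality (3.27)) with `f ≡ 0`, for a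
classical positive solution of `Δ_p u = div(‖∇u‖^(p−2)∇u) ≤ 0` on an open `Ω ⊆ ℝ^m` with
nowhere vanishing gradient: `((p−1)/p)^p (‖∇u‖/u)^p` is a Hardy weight for the
`p`-Laplacian on `Ω`. -/
theorem hardy_pLaplacian (m : ℕ) (hm : 1 ≤ m) (p : ℝ) (hp : 1 < p)
    (Ω : Set (EuclideanSpace ℝ (Fin m))) (hΩ : IsOpen Ω)
    (u : EuclideanSpace ℝ (Fin m) → ℝ)
    (hu : ContDiffOn ℝ 2 u Ω) (hupos : ∀ x ∈ Ω, 0 < u x)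
    (hgrad : ∀ x ∈ Ω, gradient u x ≠ 0)
    (hsuper : ∀ x ∈ Ω,
      diverg (fun y => ‖gradient u y‖ ^ (p - 2) • gradient u y) x ≤ 0)
    (φ : EuclideanSpace ℝ (Fin m) → ℝ) (hφ : ContDiff ℝ 1 φ)
    (hφc : HasCompactSupport φ) (hφsupp : tsupport φ ⊆ Ω) :
    ((p - 1) / p) ^ p * ∫ x in Ω, (‖gradient u x‖ / u x) ^ p * |φ x| ^ p ≤
      ∫ x in Ω, ‖gradient φ x‖ ^ p :=
  hardy_pLaplacian_general m p hp Ω hΩ u hu hupos hgrad hsuper φ hφ hφc hφsupp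
end

section
/- Let m ≥ 2 be an integer and let κ > 0 and t > 0 be real numbers. Then sinh(κt)^(m−1) · ∫_t^∞ sinh(κs)^(1−m) ds ≥ tanh(κt)/(2·m·κ). Equivalently, setting χ(t) = (1/4)·( sinh(κt)^(m−1) · ∫_t^∞ sinh(κs)^(1−m) ds )^(−2), one has √(χ(t)) ≤ m·κ·coth(κt) for all t > 0. -/
/-!
Write `S u = sinh (κ u)`. The function `G = -tanh(κ·) S^(1-m) / (mκ)` tends to `0` at infinity and
has derivative `G' = S^(1-m) (m - 2 + tanh(κ·)²) / m`. For `m ≥ 2`, since `tanh` is increasing with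
values in `(-1, 1)`, on `(t, ∞)` this derivative satisfies
`tanh(κt)² S^(1-m) / m ≤ G' ≤ S^(1-m)`.
The left inequality makes `S^(1-m)` integrable on `(t, ∞)`, and the right one gives
`∫_t^∞ S^(1-m) ≥ -G(t) = tanh(κt) S(t)^(1-m) / (mκ)`, which is the claim with the constant `1/(mκ)`
in place of `1/(2mκ)`.
-/

open MeasureTheory Real Filter Topology Set

section ImproperComparison

variable {f g g' : ℝ → ℝ} {a l : ℝ}

theorem integrableOn_Ioi_of_le_const_mul_deriv (C : ℝ)
    (hderiv : ∀ x ∈ Ici a, HasDerivAt g (g' x) x) (hg' : ∀ x ∈ Ioi a, 0 ≤ g' x)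
    (hg : Tendsto g atTop (𝓝 l)) (hf : ContinuousOn f (Ioi a))
    (hf₀ : ∀ x ∈ Ioi a, 0 ≤ f x) (hfC : ∀ x ∈ Ioi a, f x ≤ C * g' x) :
    IntegrableOn f (Ioi a) := by
  refine Integrable.mono' ((integrableOn_Ioi_deriv_of_nonneg' hderiv hg' hg).const_mul C)
    (hf.aestronglyMeasurable measurableSet_Ioi) ?_
  filter_upwards [ae_restrict_mem measurableSet_Ioi] with x hx
  rw [norm_of_nonneg (hf₀ x hx)]
  exact hfC x hx

theorem sub_le_integral_Ioi_of_deriv_le (hderiv : ∀ x ∈ Ici a, HasDerivAt g (g' x) x)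
    (hg' : ∀ x ∈ Ioi a, 0 ≤ g' x) (hg : Tendsto g atTop (𝓝 l))
    (hf : IntegrableOn f (Ioi a)) (hle : ∀ x ∈ Ioi a, g' x ≤ f x) :
    l - g a ≤ ∫ x in Ioi a, f x := by
  rw [← integral_Ioi_of_hasDerivAt_of_nonneg' hderiv hg' hg]
  exact setIntegral_mono_on (integrableOn_Ioi_deriv_of_nonneg' hderiv hg' hg) hf
    measurableSet_Ioi hle

end ImproperComparison

namespace Real

theorem hasDerivAt_tanh (x : ℝ) : HasDerivAt tanh (1 - tanh x ^ 2) x := by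
  have hquot := (hasDerivAt_sinh x).div (hasDerivAt_cosh x) (cosh_pos x).ne'
  rw [show tanh = sinh / cosh from funext tanh_eq_sinh_div_cosh]
  refine hquot.congr_deriv ?_
  rw [Pi.div_apply]
  field_simp

theorem tanh_le_tanh {x y : ℝ} (h : x ≤ y) : tanh x ≤ tanh y := by
  have hsub : 0 ≤ sinh (y - x) := sinh_nonneg_iff.2 (sub_nonneg.2 h)
  rw [sinh_sub] at hsub
  rw [tanh_eq_sinh_div_cosh, tanh_eq_sinh_div_cosh, div_le_div_iff₀ (cosh_pos x) (cosh_pos y)]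
  linarith

theorem tanh_pos {x : ℝ} (hx : 0 < x) : 0 < tanh x := by
  rw [tanh_eq_sinh_div_cosh]
  exact div_pos (sinh_pos_iff.2 hx) (cosh_pos x)

theorem tendsto_sinh_atTop : Tendsto sinh atTop atTop :=
  tendsto_atTop_mono' _ ((eventually_ge_atTop 0).mono fun _ hx => self_le_sinh_iff.2 hx)
    tendsto_id

end Real

section SinhRpow

variable {m κ : ℝ}

noncomputable def sinhRpowPrimitive (m κ u : ℝ) : ℝ :=
  -(tanh (κ * u) * sinh (κ * u) ^ (1 - m)) / (m * κ)

theorem hasDerivAt_sinhRpowPrimitive (hm : m ≠ 0) (hκ : κ ≠ 0) {u : ℝ}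
    (hu : 0 < sinh (κ * u)) :
    HasDerivAt (sinhRpowPrimitive m κ)
      (sinh (κ * u) ^ (1 - m) * (m - 2 + tanh (κ * u) ^ 2) / m) u := by
  have hlin : HasDerivAt (fun u => κ * u) κ u := by
    simpa using (hasDerivAt_id u).const_mul κ
  have htanh := (hasDerivAt_tanh (κ * u)).comp u hlin
  have hpow := hlin.sinh.rpow_const (p := 1 - m) (Or.inl hu.ne')
  refine ((htanh.mul hpow).neg.div_const (m * κ)).congr_deriv ?_
  rw [Function.comp_apply, rpow_sub_one hu.ne', tanh_eq_sinh_div_cosh]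
  field_simp
  ring

theorem tendsto_sinhRpowPrimitive_atTop (hm : 1 < m) (hκ : 0 < κ) :
    Tendsto (sinhRpowPrimitive m κ) atTop (𝓝 0) := by
  have hsinh : Tendsto (fun u => sinh (κ * u)) atTop atTop :=
    tendsto_sinh_atTop.comp (tendsto_id.const_mul_atTop hκ)
  have hpow : Tendsto (fun u => sinh (κ * u) ^ (1 - m) / (m * κ)) atTop (𝓝 0) := by
    simpa [neg_sub] using ((tendsto_rpow_neg_atTop (sub_pos.2 hm)).comp hsinh).div_const (m * κ)
  refine squeeze_zero_norm' ?_ hpow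
  filter_upwards [hsinh.eventually_gt_atTop 0] with u hu
  have hmκ : 0 < m * κ := by positivity
  rw [sinhRpowPrimitive, norm_div, norm_neg, norm_mul, norm_of_nonneg (rpow_pos_of_pos hu _).le,
    norm_of_nonneg hmκ.le]
  gcongr
  exact mul_le_of_le_one_left (rpow_pos_of_pos hu _).le (abs_tanh_lt_one _).le

theorem integrableOn_sinh_rpow_Ioi (hm : 2 ≤ m) (hκ : 0 < κ) {t : ℝ} (ht : 0 < t) :
    IntegrableOn (fun s => sinh (κ * s) ^ (1 - m)) (Ioi t) := by
  have hm₀ : 0 < m := by linarith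
  have hsinh : ∀ s ∈ Ici t, 0 < sinh (κ * s) := fun s hs =>
    sinh_pos_iff.2 (mul_pos hκ (ht.trans_le hs))
  have htanh : 0 < tanh (κ * t) := tanh_pos (mul_pos hκ ht)
  have hdom : ∀ s ∈ Ioi t, sinh (κ * s) ^ (1 - m) ≤
      (m / tanh (κ * t) ^ 2) * (sinh (κ * s) ^ (1 - m) * (m - 2 + tanh (κ * s) ^ 2) / m) := by
    intro s hs
    have hmono : tanh (κ * t) ≤ tanh (κ * s) :=
      tanh_le_tanh (mul_le_mul_of_nonneg_left (le_of_lt hs) hκ.le)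
    have hsq : tanh (κ * t) ^ 2 ≤ m - 2 + tanh (κ * s) ^ 2 := by nlinarith
    calc sinh (κ * s) ^ (1 - m)
        = (m / tanh (κ * t) ^ 2) * (sinh (κ * s) ^ (1 - m) * tanh (κ * t) ^ 2 / m) := by
          field_simp
      _ ≤ _ := by
          gcongr
          exact (rpow_pos_of_pos (hsinh s (mem_Ici_of_Ioi hs)) _).le
  refine integrableOn_Ioi_of_le_const_mul_deriv _
    (fun s hs => hasDerivAt_sinhRpowPrimitive hm₀.ne' hκ.ne' (hsinh s hs)) (fun s hs => ?_)
    (tendsto_sinhRpowPrimitive_atTop (by linarith) hκ)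
    ((continuous_sinh.comp (continuous_const_mul κ)).continuousOn.rpow_const
      fun s hs => Or.inl (hsinh s (mem_Ici_of_Ioi hs)).ne')
    (fun s hs => (rpow_pos_of_pos (hsinh s (mem_Ici_of_Ioi hs)) _).le) hdom
  have := rpow_pos_of_pos (hsinh s (mem_Ici_of_Ioi hs)) (1 - m)
  have : 0 ≤ m - 2 := by linarith
  positivity

theorem tanh_div_le_sinh_rpow_mul_integral_Ioi (hm : 2 ≤ m) (hκ : 0 < κ) {t : ℝ} (ht : 0 < t) :
    tanh (κ * t) / (m * κ) ≤ sinh (κ * t) ^ (m - 1) * ∫ s in Ioi t, sinh (κ * s) ^ (1 - m) := by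
  have hm₀ : 0 < m := by linarith
  have hsinh : ∀ s ∈ Ici t, 0 < sinh (κ * s) := fun s hs =>
    sinh_pos_iff.2 (mul_pos hκ (ht.trans_le hs))
  have hlower := sub_le_integral_Ioi_of_deriv_le
    (fun s hs => hasDerivAt_sinhRpowPrimitive hm₀.ne' hκ.ne' (hsinh s hs))
    (fun s hs => by
      have := rpow_pos_of_pos (hsinh s (mem_Ici_of_Ioi hs)) (1 - m)
      have : 0 ≤ m - 2 := by linarith
      positivity)
    (tendsto_sinhRpowPrimitive_atTop (by linarith) hκ) (integrableOn_sinh_rpow_Ioi hm hκ ht)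
    (fun s hs => by
      rw [div_le_iff₀ hm₀]
      nlinarith [rpow_pos_of_pos (hsinh s (mem_Ici_of_Ioi hs)) (1 - m), tanh_sq_lt_one (κ * s)])
  have hpow : 0 < sinh (κ * t) ^ (m - 1) := rpow_pos_of_pos (hsinh t self_mem_Ici) _
  calc tanh (κ * t) / (m * κ) = sinh (κ * t) ^ (m - 1) * (0 - sinhRpowPrimitive m κ t) := by
        rw [sinhRpowPrimitive, show 1 - m = -(m - 1) by ring, rpow_neg (hsinh t self_mem_Ici).le]
        field_simp
        ring
    _ ≤ _ := mul_le_mul_of_nonneg_left hlower hpow.le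

end SinhRpow

/-- The claim (5.18) in the proof of Theorem 5.3 of the paper:
`ζ(t) = m g_κ'(t)/g_κ(t) − √(χ(t)) ≥ 0` on `(0,∞)`, where `g_κ(t) = sinh(κt)/κ`.
Equivalently, `sinh(κt)^(m−1) ∫_t^∞ sinh(κs)^(1−m) ds ≥ tanh(κt)/(2mκ)`. -/
theorem hyperbolic_zeta_nonneg (m : ℕ) (hm : 2 ≤ m) (κ t : ℝ) (hκ : 0 < κ) (ht : 0 < t) :
    Real.tanh (κ * t) / (2 * m * κ) ≤
      Real.sinh (κ * t) ^ ((m : ℝ) - 1) *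
        ∫ s in Set.Ioi t, Real.sinh (κ * s) ^ (1 - (m : ℝ)) := by
  have htanh : 0 < tanh (κ * t) := tanh_pos (mul_pos hκ ht)
  refine le_trans ?_ (tanh_div_le_sinh_rpow_mul_integral_Ioi (by exact_mod_cast hm) hκ ht)
  gcongr
  linarith
end

section
/- Let α > 0 be real and let g₁, g₂ : (0,∞) → (0,∞) be continuous functions such that ∫_1^∞ g₁(s)^(−α) ds < ∞ and ∫_1^∞ g₂(s)^(−α) ds < ∞, and such that the ratio g₁/g₂ is non-decreasing on (0,∞). Then for every r > 0, g₁(r)^α · ∫_r^∞ g₁(s)^(−α) ds ≤ g₂(r)^α · ∫_r^∞ g₂(s)^(−α) ds. -/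
open MeasureTheory Real Set

/-!
For `s ≥ r` the monotonicity of `g₁ / g₂` gives `g₁ r / g₁ s ≤ g₂ r / g₂ s`, hence
`g₁(r)^α g₁(s)^(-α) ≤ g₂(r)^α g₂(s)^(-α)`; integrating over `s > r` is the claim.
-/

lemma integrableOn_Ioi_of_continuousOn_of_integrableOn_Ioi {E : Type*} [NormedAddCommGroup E]
    {f : ℝ → E} {a b r : ℝ} (hr : a < r) (hc : ContinuousOn f (Ioi a))
    (hint : IntegrableOn f (Ioi b)) : IntegrableOn f (Ioi r) := by
  have hsub : Ioi r ⊆ Icc r (max b r) ∪ Ioi b := fun s (hs : r < s) => by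
    rcases le_or_gt s (max b r) with h | h
    · exact Or.inl ⟨hs.le, h⟩
    · exact Or.inr ((le_max_left b r).trans_lt h)
  refine IntegrableOn.mono_set (IntegrableOn.union ?_ hint) hsub
  exact (hc.mono fun s hs => hr.trans_le hs.1).integrableOn_Icc

lemma rpow_mul_rpow_neg {x y : ℝ} (hx : 0 ≤ x) (hy : 0 ≤ y) (α : ℝ) :
    x ^ α * y ^ (-α) = (x / y) ^ α := by
  rw [rpow_neg hy, div_rpow hx hy, div_eq_mul_inv]

lemma rpow_mul_rpow_neg_le_of_div_le_div {p q u v α : ℝ} (hp : 0 < p) (hq : 0 < q)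
    (hu : 0 < u) (hv : 0 < v) (hα : 0 ≤ α) (h : p / q ≤ u / v) :
    p ^ α * u ^ (-α) ≤ q ^ α * v ^ (-α) := by
  rw [rpow_mul_rpow_neg hp.le hu.le, rpow_mul_rpow_neg hq.le hv.le]
  refine rpow_le_rpow (by positivity) ?_ hα
  rw [div_le_div_iff₀ hq hv] at h
  rw [div_le_div_iff₀ hu hv]
  linarith

theorem hardy_weight_comparison_general (α : ℝ) (hα : 0 < α) (g₁ g₂ : ℝ → ℝ)
    (hc₂ : ContinuousOn g₂ (Set.Ioi 0))
    (hpos₁ : ∀ s ∈ Set.Ioi (0 : ℝ), 0 < g₁ s) (hpos₂ : ∀ s ∈ Set.Ioi (0 : ℝ), 0 < g₂ s)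
    (hint₂ : IntegrableOn (fun s => g₂ s ^ (-α)) (Set.Ioi 1))
    (hmono : MonotoneOn (fun s => g₁ s / g₂ s) (Set.Ioi 0)) :
    ∀ r > 0, g₁ r ^ α * ∫ s in Set.Ioi r, g₁ s ^ (-α) ≤
      g₂ r ^ α * ∫ s in Set.Ioi r, g₂ s ^ (-α) := by
  intro r hr
  have hcont : ContinuousOn (fun s => g₂ s ^ (-α)) (Ioi 0) :=
    hc₂.rpow_const fun s hs => Or.inl (hpos₂ s hs).ne'
  have hint : IntegrableOn (fun s => g₂ s ^ (-α)) (Ioi r) :=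
    integrableOn_Ioi_of_continuousOn_of_integrableOn_Ioi hr hcont hint₂
  rw [← integral_const_mul, ← integral_const_mul]
  refine setIntegral_mono_of_nonneg (fun s hs => ?_) (fun s hs => ?_) (hint.const_mul _)
  all_goals have hs0 : (0 : ℝ) < s := hr.trans hs
  · exact mul_nonneg (rpow_nonneg (hpos₁ r hr).le _) (rpow_nonneg (hpos₁ s hs0).le _)
  · exact rpow_mul_rpow_neg_le_of_div_le_div (hpos₁ r hr) (hpos₂ r hr) (hpos₁ s hs0)
      (hpos₂ s hs0) hα.le (hmono hr hs0 hs.le)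

/-- The comparison result stated in Example 4.1 of the paper: if `g₁, g₂ : (0,∞) → (0,∞)`
are continuous with `∫_1^∞ gᵢ^(−α) < ∞` and `g₁/g₂` is non-decreasing on `(0,∞)`, then
`g₁(r)^α ∫_r^∞ g₁^(−α) ≤ g₂(r)^α ∫_r^∞ g₂^(−α)` for every `r > 0` (equivalently,
`χ_{g₁} ≥ χ_{g₂}` on `(0,∞)`). -/
theorem hardy_weight_comparison (α : ℝ) (hα : 0 < α) (g₁ g₂ : ℝ → ℝ)
    (hc₁ : ContinuousOn g₁ (Set.Ioi 0)) (hc₂ : ContinuousOn g₂ (Set.Ioi 0))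
    (hpos₁ : ∀ s ∈ Set.Ioi (0 : ℝ), 0 < g₁ s) (hpos₂ : ∀ s ∈ Set.Ioi (0 : ℝ), 0 < g₂ s)
    (hint₁ : IntegrableOn (fun s => g₁ s ^ (-α)) (Set.Ioi 1))
    (hint₂ : IntegrableOn (fun s => g₂ s ^ (-α)) (Set.Ioi 1))
    (hmono : MonotoneOn (fun s => g₁ s / g₂ s) (Set.Ioi 0)) :
    ∀ r > 0, g₁ r ^ α * ∫ s in Set.Ioi r, g₁ s ^ (-α) ≤
      g₂ r ^ α * ∫ s in Set.Ioi r, g₂ s ^ (-α) :=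
  hardy_weight_comparison_general α hα g₁ g₂ hc₂ hpos₁ hpos₂ hint₂ hmono
end
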